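/- (Existence of a global minimizer, Theorem 2.) Let M > 0. The optimization problem of minimizing J(w, d, b) over (w, d, b) ∈ ℝ^m × Δ × [−M, M] has a global minimizer, and the set of all global minimizers is a bounded subset of ℝ^m × ℝ^L × ℝ. -/

import Mathlib

/-!
The objective is lower semicontinuous: the quadratic term is continuous, and `‖v₊‖₀` is a sum of
indicators of the open half-spaces `{v | 0 < v i}`, which can only drop in a limit. On the simplex,
positive definiteness of the kernels gives a uniform bound `c ‖w‖² ≤ wᵀ 𝒦(d) w` with `c > 0`, so
the sublevel sets of `J` inside the feasible set are closed and bounded, hence compact. A minimizer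
then exists by Weierstrass, and every minimizer lies in the sublevel set of a fixed feasible point.
-/

open Matrix

/-- `‖v₊‖₀`: the number of strictly positive components of `v`, as a real number. -/
noncomputable def l0pos {m : ℕ} (v : Fin m → ℝ) : ℝ :=
  ((Finset.univ.filter (fun i => 0 < v i)).card : ℝ)

open Set

lemma l0pos_nonneg {m : ℕ} (v : Fin m → ℝ) : 0 ≤ l0pos v := Nat.cast_nonneg _

lemma l0pos_eq_sum_indicator {m : ℕ} (v : Fin m → ℝ) :
    l0pos v = ∑ i, {u : Fin m → ℝ | 0 < u i}.indicator 1 v := by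
  simp only [l0pos, Finset.natCast_card_filter, indicator_apply, mem_ofPred_eq, Pi.one_apply]

lemma lowerSemicontinuous_l0pos {m : ℕ} : LowerSemicontinuous (l0pos (m := m)) := by
  rw [funext l0pos_eq_sum_indicator]
  exact lowerSemicontinuous_sum fun i _ =>
    (isOpen_lt continuous_const (continuous_apply i)).lowerSemicontinuous_indicator zero_le_one

lemma Matrix.PosDef.exists_pos_mul_sq_norm_le {n : Type*} [Fintype n] {A : Matrix n n ℝ}
    (hA : A.PosDef) : ∃ c > 0, ∀ x : n → ℝ, c * ‖x‖ ^ 2 ≤ x ⬝ᵥ A *ᵥ x := by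
  cases isEmpty_or_nonempty n
  · exact ⟨1, one_pos, fun x => by simp [Subsingleton.elim x 0]⟩
  have hQ : Continuous fun x : n → ℝ => x ⬝ᵥ A *ᵥ x := by fun_prop
  obtain ⟨u, hu, hmin⟩ := (isCompact_sphere (0 : n → ℝ) 1).exists_isMinOn
    (NormedSpace.sphere_nonempty.mpr zero_le_one) hQ.continuousOn
  have hu0 : u ≠ 0 := ne_zero_of_mem_unit_sphere ⟨u, hu⟩
  refine ⟨u ⬝ᵥ A *ᵥ u, by simpa using hA.dotProduct_mulVec_pos hu0, fun x => ?_⟩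
  rcases eq_or_ne x 0 with rfl | hx
  · simp
  have hx' : ‖x‖ ≠ 0 := norm_ne_zero_iff.mpr hx
  have hsphere : ‖x‖⁻¹ • x ∈ Metric.sphere (0 : n → ℝ) 1 := by simp [norm_smul, hx']
  calc u ⬝ᵥ A *ᵥ u * ‖x‖ ^ 2
      ≤ (‖x‖⁻¹ • x) ⬝ᵥ A *ᵥ (‖x‖⁻¹ • x) * ‖x‖ ^ 2 := by gcongr; exact hmin hsphere
    _ = x ⬝ᵥ A *ᵥ x := by
      simp only [mulVec_smul, smul_dotProduct, dotProduct_smul, smul_eq_mul]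
      field_simp

lemma exists_pos_mul_sq_norm_le_dotProduct_sum_smul_mulVec {n ι : Type*} [Fintype n] [Fintype ι]
    [Nonempty ι] {K : ι → Matrix n n ℝ} (hK : ∀ ℓ, (K ℓ).PosDef) :
    ∃ c > 0, ∀ d ∈ stdSimplex ℝ ι, ∀ x : n → ℝ,
      c * ‖x‖ ^ 2 ≤ x ⬝ᵥ (∑ ℓ, d ℓ • K ℓ) *ᵥ x := by
  choose c hc hcK using fun ℓ => (hK ℓ).exists_pos_mul_sq_norm_le
  set c₀ := Finset.univ.inf' Finset.univ_nonempty c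
  refine ⟨c₀, (Finset.lt_inf'_iff _).2 fun ℓ _ => hc ℓ, fun d hd x => ?_⟩
  rw [sum_mulVec, dotProduct_sum]
  calc c₀ * ‖x‖ ^ 2 = ∑ ℓ, d ℓ * (c₀ * ‖x‖ ^ 2) := by rw [← Finset.sum_mul, hd.2, one_mul]
    _ ≤ ∑ ℓ, x ⬝ᵥ (d ℓ • K ℓ) *ᵥ x := Finset.sum_le_sum fun ℓ _ => by
      rw [smul_mulVec, dotProduct_smul, smul_eq_mul]
      have hc₀ : c₀ ≤ c ℓ := Finset.inf'_le _ (Finset.mem_univ ℓ)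
      gcongr
      · exact hd.1 ℓ
      · exact (mul_le_mul_of_nonneg_right hc₀ (by positivity)).trans (hcK ℓ x)

lemma LowerSemicontinuous.exists_isMinOn_of_isCompact_inter_preimage_Iic {X β : Type*}
    [TopologicalSpace X] [LinearOrder β] {f : X → β} (hf : LowerSemicontinuous f) {F : Set X}
    {x₀ : X} (hx₀ : x₀ ∈ F) (hK : IsCompact (F ∩ f ⁻¹' Iic (f x₀))) : ∃ x ∈ F, IsMinOn f F x := by
  obtain ⟨x, hx, hmin⟩ := (hf.lowerSemicontinuousOn _).exists_isMinOn
    (s := F ∩ f ⁻¹' Iic (f x₀)) ⟨x₀, hx₀, le_rfl⟩ hK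
  refine ⟨x, hx.1, fun y hy => ?_⟩
  by_cases hyx₀ : f y ≤ f x₀
  · exact hmin ⟨hy, hyx₀⟩
  · exact (hmin ⟨hx₀, le_rfl⟩).trans (le_of_not_ge hyx₀)

lemma LowerSemicontinuous.isCompact_univ_prod_inter_preimage_Iic {E D : Type*}
    [NormedAddCommGroup E] [ProperSpace E] [TopologicalSpace D] [T2Space D] {f : E × D → ℝ}
    (hf : LowerSemicontinuous f) {S : Set D} (hS : IsCompact S) {c : ℝ} (hc : 0 < c)
    (hcoer : ∀ w, ∀ d ∈ S, c * ‖w‖ ^ 2 ≤ f (w, d)) (a : ℝ) :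
    IsCompact (univ ×ˢ S ∩ f ⁻¹' Iic a) := by
  refine ((isCompact_closedBall 0 √(a / c)).prod hS).of_isClosed_subset
    ((isClosed_univ.prod hS.isClosed).inter (hf.isClosed_preimage a)) ?_
  rintro ⟨w, d⟩ ⟨⟨-, hd⟩, hfa⟩
  refine ⟨?_, hd⟩
  rw [mem_closedBall_zero_iff]
  refine Real.le_sqrt_of_sq_le ((le_div_iff₀ hc).2 ?_)
  linarith [hcoer w d hd, show f (w, d) ≤ a from hfa]

section Objective

variable {m : ℕ} {ι : Type*} [Fintype ι]

/-- The paper's `J(w, d, b)`, as a function of `p = (w, d, b)`. -/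
noncomputable def mklObjective (K : ι → Matrix (Fin m) (Fin m) ℝ) (y : Fin m → ℝ) (C : ℝ)
    (p : (Fin m → ℝ) × (ι → ℝ) × ℝ) : ℝ :=
  (1 / 2) * (p.1 ⬝ᵥ (∑ ℓ, p.2.1 ℓ • K ℓ) *ᵥ p.1) +
    C * l0pos (1 - (diagonal y * ∑ ℓ, p.2.1 ℓ • K ℓ) *ᵥ p.1 - p.2.2 • y)

lemma lowerSemicontinuous_mklObjective (K : ι → Matrix (Fin m) (Fin m) ℝ) (y : Fin m → ℝ)
    {C : ℝ} (hC : 0 ≤ C) : LowerSemicontinuous (mklObjective K y C) := by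
  have hquad : Continuous fun p : (Fin m → ℝ) × (ι → ℝ) × ℝ =>
      (1 / 2) * (p.1 ⬝ᵥ (∑ ℓ, p.2.1 ℓ • K ℓ) *ᵥ p.1) := by
    fun_prop
  have hmargin : Continuous fun p : (Fin m → ℝ) × (ι → ℝ) × ℝ =>
      1 - (diagonal y * ∑ ℓ, p.2.1 ℓ • K ℓ) *ᵥ p.1 - p.2.2 • y := by
    fun_prop
  exact hquad.lowerSemicontinuous.add <| (continuous_const_mul C).comp_lowerSemicontinuous
    (lowerSemicontinuous_l0pos.comp hmargin) (monotone_mul_left_of_nonneg hC)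

lemma mul_sq_norm_le_mklObjective {K : ι → Matrix (Fin m) (Fin m) ℝ} (y : Fin m → ℝ)
    {C : ℝ} (hC : 0 ≤ C) {c : ℝ} {w : Fin m → ℝ} {d : ι → ℝ}
    (hcoer : c * ‖w‖ ^ 2 ≤ w ⬝ᵥ (∑ ℓ, d ℓ • K ℓ) *ᵥ w) (b : ℝ) :
    c / 2 * ‖w‖ ^ 2 ≤ mklObjective K y C (w, d, b) := by
  have := mul_nonneg hC (l0pos_nonneg (1 - (diagonal y * ∑ ℓ, d ℓ • K ℓ) *ᵥ w - b • y))
  unfold mklObjective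
  linarith

end Objective

theorem stmt_5_general (m L : ℕ) (hL : 1 ≤ L)
    (y : Fin m → ℝ)
    (K : Fin L → Matrix (Fin m) (Fin m) ℝ) (hK : ∀ ℓ, (K ℓ).PosDef)
    (C : ℝ) (hC : 0 < C)
    (J : (Fin m → ℝ) × (Fin L → ℝ) × ℝ → ℝ)
    (hJ : ∀ (w : Fin m → ℝ) (d : Fin L → ℝ) (b : ℝ),
      J (w, d, b) =
        (1 / 2) * (w ⬝ᵥ (∑ ℓ, d ℓ • K ℓ).mulVec w) +
        C * l0pos (1 - (Matrix.diagonal y * ∑ ℓ, d ℓ • K ℓ).mulVec w - b • y))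
    (M : ℝ) (hM : 0 < M)
    (F : Set ((Fin m → ℝ) × (Fin L → ℝ) × ℝ))
    (hF : F = {p | (∀ ℓ, 0 ≤ p.2.1 ℓ) ∧ (∑ ℓ, p.2.1 ℓ) = 1 ∧ p.2.2 ∈ Set.Icc (-M) M}) :
    (∃ p ∈ F, ∀ q ∈ F, J p ≤ J q) ∧
    Bornology.IsBounded {p | p ∈ F ∧ ∀ q ∈ F, J p ≤ J q} := by
  have : Nonempty (Fin L) := ⟨⟨0, hL⟩⟩
  obtain rfl : J = mklObjective K y C := funext fun p => hJ p.1 p.2.1 p.2.2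
  replace hF : F = univ ×ˢ stdSimplex ℝ (Fin L) ×ˢ Icc (-M) M := by
    rw [hF]; ext; simp [stdSimplex, and_assoc]
  obtain ⟨d₀, hd₀⟩ : (stdSimplex ℝ (Fin L)).Nonempty := ⟨_, single_mem_stdSimplex ℝ ⟨0, hL⟩⟩
  have hp₀ : ((0, d₀, 0) : (Fin m → ℝ) × (Fin L → ℝ) × ℝ) ∈ F := by
    rw [hF]; exact ⟨mem_univ _, hd₀, by simp [hM.le]⟩
  obtain ⟨c, hc, hcoer⟩ := exists_pos_mul_sq_norm_le_dotProduct_sum_smul_mulVec hK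
  have hlsc := lowerSemicontinuous_mklObjective K y hC.le
  have hsublevel : IsCompact (F ∩ mklObjective K y C ⁻¹' Iic (mklObjective K y C (0, d₀, 0))) := by
    rw [hF]
    refine hlsc.isCompact_univ_prod_inter_preimage_Iic ((isCompact_stdSimplex _ _).prod
      isCompact_Icc) (half_pos hc) (fun w ⟨d, b⟩ hdb => ?_) _
    exact mul_sq_norm_le_mklObjective y hC.le (hcoer d hdb.1 w) b
  exact ⟨hlsc.exists_isMinOn_of_isCompact_inter_preimage_Iic hp₀ hsublevel,
    hsublevel.isBounded.subset fun p hp => ⟨hp.1, hp.2 _ hp₀⟩⟩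

/-- Existence of a global minimizer (Theorem 2): the problem of minimizing `J` over
`ℝ^m × Δ × [−M, M]` has a global minimizer, and the set of all global minimizers is bounded. -/
theorem stmt_5 (m L : ℕ) (hm : 1 ≤ m) (hL : 1 ≤ L)
    (y : Fin m → ℝ) (hy : ∀ i, y i = 1 ∨ y i = -1)
    (K : Fin L → Matrix (Fin m) (Fin m) ℝ) (hK : ∀ ℓ, (K ℓ).PosDef)
    (C : ℝ) (hC : 0 < C)
    (J : (Fin m → ℝ) × (Fin L → ℝ) × ℝ → ℝ)
    (hJ : ∀ (w : Fin m → ℝ) (d : Fin L → ℝ) (b : ℝ),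
      J (w, d, b) =
        (1 / 2) * (w ⬝ᵥ (∑ ℓ, d ℓ • K ℓ).mulVec w) +
        C * l0pos (1 - (Matrix.diagonal y * ∑ ℓ, d ℓ • K ℓ).mulVec w - b • y))
    (M : ℝ) (hM : 0 < M)
    (F : Set ((Fin m → ℝ) × (Fin L → ℝ) × ℝ))
    (hF : F = {p | (∀ ℓ, 0 ≤ p.2.1 ℓ) ∧ (∑ ℓ, p.2.1 ℓ) = 1 ∧ p.2.2 ∈ Set.Icc (-M) M}) :
    (∃ p ∈ F, ∀ q ∈ F, J p ≤ J q) ∧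
    Bornology.IsBounded {p | p ∈ F ∧ ∀ q ∈ F, J p ≤ J q} :=
  stmt_5_general m L hL y K hK C hC J hJ M hM F hF
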